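/- arXiv:1505.04340 — 5 statements merged into one kernel-verified Lean document; each statement's English description precedes it below -/
import Mathlib

section
/- The matrix X = Lᵀ (S⁻¹ - C⁻¹) L equals (I - H)⁻¹ - I, and its eigenvalues are θ_k = λ_k / (1 - λ_k) for k = 1, …, s, where λ_k are the eigenvalues of H; in particular all θ_k are nonnegative. -/
/-!
Since `C = L Lᵀ`, the Schur complement factors as `S = L (1 - H) Lᵀ`; hence
`X = Lᵀ (L⁻ᵀ (1 - H)⁻¹ L⁻¹ - L⁻ᵀ L⁻¹) L = (1 - H)⁻¹ - 1`, and an eigenvector of `H` for `λ`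
is an eigenvector of `X` for `1/(1 - λ) - 1 = λ/(1 - λ)`. Positive definiteness of `A` makes `S`
positive definite, so `1 - H`, being congruent to `S`, is positive definite, while
`H = (E L⁻ᵀ)ᵀ B⁻¹ (E L⁻ᵀ)` is positive semidefinite: thus `0 ≤ λ < 1`.
-/

open Matrix

namespace Matrix

theorem PosDef.of_fromBlocks₁₁ {l m R : Type*} [Ring R] [PartialOrder R] [StarRing R]
    {A : Matrix l l R} {B : Matrix l m R} {C : Matrix m l R} {D : Matrix m m R}
    (h : (fromBlocks A B C D).PosDef) : A.PosDef :=
  h.submatrix Sum.inl_injective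

variable {n : Type*} [Fintype n]

theorem PosDef.schur_complement₁₁ {m K : Type*} [Fintype m] [DecidableEq m]
    [Field K] [PartialOrder K] [StarRing K]
    {A : Matrix m m K} {B : Matrix m n K} {D : Matrix n n K}
    (h : (fromBlocks A B Bᴴ D).PosDef) : (D - Bᴴ * A⁻¹ * B).PosDef := by
  have hA := h.of_fromBlocks₁₁
  have : Invertible A := hA.isUnit.invertible
  refine .of_dotProduct_mulVec_pos ((IsHermitian.fromBlocks₁₁ B D hA.1).mp h.1) fun y hy => ?_
  have hxy : (-((A⁻¹ * B) *ᵥ y)) ⊕ᵥ y ≠ 0 := fun h0 =>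
    hy (funext fun i => by simpa using congrFun h0 (Sum.inr i))
  simpa [dotProduct_mulVec, schur_complement_eq₁₁ B D _ _ hA.1] using
    h.dotProduct_mulVec_pos hxy

section Congruence

variable [DecidableEq n] {R : Type*} [CommRing R] {L : Matrix n n R}

theorem mul_one_sub_inv_mul_mul_inv_transpose_mul (hL : IsUnit L.det) (K : Matrix n n R) :
    L * (1 - L⁻¹ * K * Lᵀ⁻¹) * Lᵀ = L * Lᵀ - K := by
  have hLT : IsUnit Lᵀ.det := by rwa [det_transpose]
  simp only [mul_sub, sub_mul, mul_one, mul_assoc, nonsing_inv_mul _ hLT,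
    mul_nonsing_inv_cancel_left _ _ hL]

theorem transpose_mul_inv_sub_inv_mul (hL : IsUnit L.det) (M : Matrix n n R) :
    Lᵀ * ((L * M * Lᵀ)⁻¹ - (L * Lᵀ)⁻¹) * L = M⁻¹ - 1 := by
  have hLT : IsUnit Lᵀ.det := by rwa [det_transpose]
  simp only [mul_inv_rev, mul_sub, sub_mul, ← mul_assoc, mul_nonsing_inv _ hLT, one_mul,
    nonsing_inv_mul_cancel_right _ _ hL, nonsing_inv_mul _ hL]

end Congruence

section Eigenvector

theorem one_sub_mulVec_eq_smul {K : Type*} [Field K] [DecidableEq n] {H : Matrix n n K}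
    {v : n → K} {μ : K} (h : H *ᵥ v = μ • v) : (1 - H) *ᵥ v = (1 - μ) • v := by
  rw [sub_mulVec, one_mulVec, h, sub_smul, one_smul]

theorem inv_one_sub_sub_one_mulVec_eq_smul [DecidableEq n] {K : Type*} [Field K]
    {H : Matrix n n K} {v : n → K} {μ : K} (hH : IsUnit (1 - H).det) (hμ : μ ≠ 1)
    (h : H *ᵥ v = μ • v) : ((1 - H)⁻¹ - 1) *ᵥ v = (μ / (1 - μ)) • v := by
  have : Invertible (1 - H) := (1 - H).invertibleOfIsUnitDet hH
  have hμ' : 1 - μ ≠ 0 := sub_ne_zero.mpr hμ.symm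
  have hinv : (1 - H)⁻¹ *ᵥ v = (1 - μ)⁻¹ • v := by
    refine inv_mulVec_eq_vec ?_
    rw [mulVec_smul, one_sub_mulVec_eq_smul h, smul_smul, inv_mul_cancel₀ hμ', one_smul]
  rw [sub_mulVec, one_mulVec, hinv, show μ / (1 - μ) = (1 - μ)⁻¹ - 1 by field_simp; ring,
    sub_smul, one_smul]

variable {M : Matrix n n ℝ} {v : n → ℝ} {μ : ℝ}

theorem PosSemidef.nonneg_of_mulVec_eq_smul (hM : M.PosSemidef) (hv : v ≠ 0)
    (h : M *ᵥ v = μ • v) : 0 ≤ μ := by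
  have hvv : 0 < v ⬝ᵥ v := by simpa using dotProduct_star_self_pos_iff.mpr hv
  have := hM.dotProduct_mulVec_nonneg v
  rw [h, star_trivial, dotProduct_smul, smul_eq_mul] at this
  exact nonneg_of_mul_nonneg_left this hvv

theorem PosDef.pos_of_mulVec_eq_smul (hM : M.PosDef) (hv : v ≠ 0)
    (h : M *ᵥ v = μ • v) : 0 < μ := by
  have hvv : 0 < v ⬝ᵥ v := by simpa using dotProduct_star_self_pos_iff.mpr hv
  have := hM.dotProduct_mulVec_pos hv
  rw [h, star_trivial, dotProduct_smul, smul_eq_mul] at this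
  exact pos_of_mul_pos_left this hvv.le

end Eigenvector

end Matrix

theorem stmt_2_general {m s : ℕ}
    (B : Matrix (Fin m) (Fin m) ℝ) (C : Matrix (Fin s) (Fin s) ℝ)
    (E : Matrix (Fin m) (Fin s) ℝ) (L : Matrix (Fin s) (Fin s) ℝ)
    (hA : (Matrix.fromBlocks B E Eᵀ C).PosDef)
    (hL : C = L * Lᵀ) (hLdet : IsUnit L.det)
    (H : Matrix (Fin s) (Fin s) ℝ) (hH : H = L⁻¹ * Eᵀ * B⁻¹ * E * (Lᵀ)⁻¹)
    (S : Matrix (Fin s) (Fin s) ℝ) (hS : S = C - Eᵀ * B⁻¹ * E)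
    (X : Matrix (Fin s) (Fin s) ℝ) (hX : X = Lᵀ * (S⁻¹ - C⁻¹) * L) :
    X = (1 - H)⁻¹ - 1 ∧
      ∀ lam : ℝ, (∃ v : Fin s → ℝ, v ≠ 0 ∧ H *ᵥ v = lam • v) →
        (∃ w : Fin s → ℝ, w ≠ 0 ∧ X *ᵥ w = (lam / (1 - lam)) • w) ∧
          0 ≤ lam / (1 - lam) := by
  rw [← conjTranspose_eq_transpose_of_trivial] at hA hS hH
  have hB : B.PosDef := hA.of_fromBlocks₁₁
  have hSpos : S.PosDef := hS ▸ hA.schur_complement₁₁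
  have hSconj : S = L * (1 - H) * Lᵀ := by
    rw [hS, hL, hH, ← mul_one_sub_inv_mul_mul_inv_transpose_mul hLdet]
    simp only [Matrix.mul_assoc]
  have hIH : (1 - H).PosDef := by
    rwa [← ((isUnit_iff_isUnit_det L).mpr hLdet).posDef_star_right_conjugate_iff,
      star_eq_conjTranspose, conjTranspose_eq_transpose_of_trivial, ← hSconj]
  have hHpsd : H.PosSemidef := by
    have hHgram : H = (E * Lᵀ⁻¹)ᴴ * B⁻¹ * (E * Lᵀ⁻¹) := by
      rw [hH, conjTranspose_mul, conjTranspose_nonsing_inv,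
        conjTranspose_eq_transpose_of_trivial Lᵀ, transpose_transpose]
      simp only [Matrix.mul_assoc]
    exact hHgram ▸ hB.inv.posSemidef.conjTranspose_mul_mul_same _
  have hXeq : X = (1 - H)⁻¹ - 1 := by
    rw [hX, hSconj, hL, transpose_mul_inv_sub_inv_mul hLdet]
  refine ⟨hXeq, fun lam ⟨v, hv, hHv⟩ => ?_⟩
  have hgap : 0 < 1 - lam := hIH.pos_of_mulVec_eq_smul hv (one_sub_mulVec_eq_smul hHv)
  refine ⟨⟨v, hv, ?_⟩, div_nonneg (hHpsd.nonneg_of_mulVec_eq_smul hv hHv) hgap.le⟩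
  rw [hXeq]
  exact inv_one_sub_sub_one_mulVec_eq_smul hIH.det_pos.ne'.isUnit (sub_pos.mp hgap).ne hHv

/-- `X = Lᵀ (S⁻¹ - C⁻¹) L` equals `(I - H)⁻¹ - I`, and if `λ` is an
eigenvalue of `H` then `λ/(1-λ)` is a (nonnegative) eigenvalue of `X`. -/
theorem stmt_2 {m s : ℕ}
    (B : Matrix (Fin m) (Fin m) ℝ) (C : Matrix (Fin s) (Fin s) ℝ)
    (E : Matrix (Fin m) (Fin s) ℝ) (L : Matrix (Fin s) (Fin s) ℝ)
    (hA : (Matrix.fromBlocks B E Eᵀ C).PosDef)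
    (hLtri : ∀ i j : Fin s, i < j → L i j = 0)
    (hL : C = L * Lᵀ) (hLdet : IsUnit L.det)
    (H : Matrix (Fin s) (Fin s) ℝ) (hH : H = L⁻¹ * Eᵀ * B⁻¹ * E * (Lᵀ)⁻¹)
    (S : Matrix (Fin s) (Fin s) ℝ) (hS : S = C - Eᵀ * B⁻¹ * E)
    (X : Matrix (Fin s) (Fin s) ℝ) (hX : X = Lᵀ * (S⁻¹ - C⁻¹) * L) :
    X = (1 - H)⁻¹ - 1 ∧
      ∀ lam : ℝ, (∃ v : Fin s → ℝ, v ≠ 0 ∧ H *ᵥ v = lam • v) →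
        (∃ w : Fin s → ℝ, w ≠ 0 ∧ X *ᵥ w = (lam / (1 - lam)) • w) ∧
          0 ≤ lam / (1 - lam) :=
  stmt_2_general B C E L hA hL hLdet H hH S hS X hX
end

section
/- If λ̃_i = λ_i for i ≤ k and λ̃_i = θ for i > k with λ_{k+1} ≤ θ < 1, then all eigenvalues of S S̃⁻¹ lie in the interval [1, (1-λ_s)/(1-θ)] ⊆ [1, 1/(1-θ)]. -/
open Matrix

/-- with `λ̃_i = λ_i` for `i < k` (0-based) and `λ̃_i = θ` otherwise, where
`λ_{k+1} ≤ θ < 1`, all eigenvalues `σ_i = (1-λ_i)/(1-λ̃_i)` of `S S̃⁻¹` lie in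
`[1, (1-λ_s)/(1-θ)] ⊆ [1, 1/(1-θ)]`. -/
theorem stmt_6 {s k : ℕ} (hk : k < s)
    (lam : Fin s → ℝ) (theta : ℝ)
    (hlam0 : ∀ i, 0 ≤ lam i ∧ lam i < 1)
    (hdec : ∀ i j : Fin s, i ≤ j → lam j ≤ lam i)
    (htheta : lam ⟨k, hk⟩ ≤ theta) (htheta1 : theta < 1)
    (tlam sig : Fin s → ℝ)
    (htlam : ∀ i : Fin s, tlam i = if (i : ℕ) < k then lam i else theta)
    (hsig : ∀ i : Fin s, sig i = (1 - lam i) / (1 - tlam i)) :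
    (∀ i : Fin s, sig i ∈ Set.Icc 1 ((1 - lam ⟨s - 1, by omega⟩) / (1 - theta))) ∧
      Set.Icc (1 : ℝ) ((1 - lam ⟨s - 1, by omega⟩) / (1 - theta)) ⊆
        Set.Icc (1 : ℝ) (1 / (1 - theta)) := by
  have hth : (0:ℝ) < 1 - theta := by linarith
  have hsl : lam ⟨s - 1, by omega⟩ ≤ lam ⟨k, hk⟩ := hdec ⟨k, hk⟩ ⟨s-1, by omega⟩ (by simp [Fin.le_def]; omega)
  have hub : (1:ℝ) ≤ (1 - lam ⟨s - 1, by omega⟩) / (1 - theta) := by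
    rw [le_div_iff₀ hth]; linarith
  constructor
  · intro i
    rw [hsig i, htlam i]
    by_cases h : (i:ℕ) < k
    · simp only [h, if_true]
      have h1 : (0:ℝ) < 1 - lam i := by have := (hlam0 i).2; linarith
      rw [div_self (ne_of_gt h1)]
      exact ⟨le_refl 1, hub⟩
    · simp only [h, if_false]
      have hik : lam i ≤ lam ⟨k, hk⟩ := hdec ⟨k, hk⟩ i (by simp [Fin.le_def]; omega)
      have hsi : lam ⟨s - 1, by omega⟩ ≤ lam i := hdec i ⟨s-1, by omega⟩ (by simp [Fin.le_def]; omega)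
      refine ⟨by rw [le_div_iff₀ hth]; linarith, ?_⟩
      exact (div_le_div_iff_of_pos_right hth).mpr (by linarith)
  · apply Set.Icc_subset_Icc_right
    apply (div_le_div_iff_of_pos_right hth).mpr
    have := (hlam0 ⟨s-1, by omega⟩).1
    linarith
end

section
/- With θ = λ_{k+1}, Λ_k = diag(λ_1,…,λ_k), and Z_k = L⁻ᵀ U_k where U_k holds the eigenvectors of H for the k largest eigenvalues, the approximate inverse S̃⁻¹ = L⁻ᵀ U (I-Λ̃)⁻¹ Uᵀ L⁻¹ (with λ̃_i = λ_i for i ≤ k and λ̃_i = θ otherwise) equals (1/(1-θ)) C⁻¹ + Z_k [ (I - Λ_k)⁻¹ - (1-θ)⁻¹ I ] Z_kᵀ. -/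
open Matrix

private lemma sum_castLE {s k : ℕ} (hks : k ≤ s) (f : Fin s → ℝ)
    (hf : ∀ i : Fin s, ¬ (i : ℕ) < k → f i = 0) :
    (∑ i : Fin s, f i) = ∑ j : Fin k, f (Fin.castLE hks j) := by
  classical
  have h2 : (∑ j : Fin k, f (Fin.castLE hks j)) =
      ∑ x ∈ Finset.map ⟨Fin.castLE hks, Fin.castLE_injective hks⟩ Finset.univ, f x := by
    rw [Finset.sum_map]
    rfl
  rw [h2]
  refine (Finset.sum_subset (Finset.subset_univ _) ?_).symm
  intro x _ hx
  apply hf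
  intro hlt
  exact hx (Finset.mem_map.2 ⟨⟨(x : ℕ), hlt⟩, Finset.mem_univ _, by simp [Fin.ext_iff]⟩)

private lemma key {s k : ℕ} (hks : k ≤ s) (U : Matrix (Fin s) (Fin s) ℝ) (e : Fin s → ℝ)
    (he : ∀ i : Fin s, ¬ (i : ℕ) < k → e i = 0) :
    U * Matrix.diagonal e * Uᵀ =
      (U.submatrix id (Fin.castLE hks)) *
        Matrix.diagonal (fun j : Fin k => e (Fin.castLE hks j)) *
        (U.submatrix id (Fin.castLE hks))ᵀ := by
  ext i j
  simp only [Matrix.mul_apply, Matrix.diagonal_apply, Matrix.transpose_apply,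
    Matrix.submatrix_apply, id_eq, mul_ite, mul_zero, ite_mul, zero_mul,
    Finset.sum_ite_eq, Finset.sum_ite_eq', Finset.mem_univ, if_pos]
  exact sum_castLE hks (fun x => U i x * e x * U j x)
    (fun x hx => by show U i x * e x * U j x = 0; rw [he x hx]; ring)

/-- the expression of the approximate Schur complement inverse
`S̃⁻¹ = L⁻ᵀ U (I-Λ̃)⁻¹ Uᵀ L⁻¹` (with `θ = λ_{k+1}`) in terms of `C⁻¹` and the
low-rank correction `Z_k [(I-Λ_k)⁻¹ - (1-θ)⁻¹ I] Z_kᵀ`, where `Z_k = L⁻ᵀ U_k`. -/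
theorem stmt_8 {s k : ℕ} (hks : k < s)
    (C L U : Matrix (Fin s) (Fin s) ℝ)
    (lam : Fin s → ℝ)
    (hlam0 : ∀ i, 0 ≤ lam i ∧ lam i < 1)
    (hdec : ∀ i j : Fin s, i ≤ j → lam j ≤ lam i)
    (hC : C = L * Lᵀ) (hLdet : IsUnit L.det)
    (hU : U * Uᵀ = 1) (hU' : Uᵀ * U = 1)
    (theta : ℝ) (htheta : theta = lam ⟨k, hks⟩)
    (tlam : Fin s → ℝ)
    (htlam : ∀ i : Fin s, tlam i = if (i : ℕ) < k then lam i else theta)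
    (Uk : Matrix (Fin s) (Fin k) ℝ)
    (hUk : Uk = U.submatrix id (Fin.castLE hks.le))
    (Lamk : Matrix (Fin k) (Fin k) ℝ)
    (hLamk : Lamk = Matrix.diagonal fun j : Fin k => lam (Fin.castLE hks.le j))
    (Zk : Matrix (Fin s) (Fin k) ℝ) (hZk : Zk = (Lᵀ)⁻¹ * Uk) :
    (Lᵀ)⁻¹ * U * (1 - Matrix.diagonal tlam)⁻¹ * Uᵀ * L⁻¹ =
      (1 / (1 - theta)) • C⁻¹ +
        Zk * ((1 - Lamk)⁻¹ - (1 / (1 - theta)) • (1 : Matrix (Fin k) (Fin k) ℝ)) * Zkᵀ := by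
  classical
  set c : ℝ := 1 / (1 - theta) with hc
  have hθ1 : theta < 1 := htheta ▸ (hlam0 _).2
  have hθne : (1 : ℝ) - theta ≠ 0 := by linarith
  have htlam1 : ∀ i : Fin s, (1 : ℝ) - tlam i ≠ 0 := by
    intro i
    rw [htlam]
    split
    · have := (hlam0 i).2; linarith
    · exact hθne
  have hsub : (1 : Matrix (Fin s) (Fin s) ℝ) - Matrix.diagonal tlam =
      Matrix.diagonal (fun i => 1 - tlam i) := by
    ext i j
    by_cases h : i = j <;> simp [h, Matrix.one_apply]
  have hdiag : (1 - Matrix.diagonal tlam)⁻¹ =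
      Matrix.diagonal (fun i => (1 - tlam i)⁻¹) := by
    rw [hsub]
    apply Matrix.inv_eq_right_inv
    have h1 : (fun i => (1 - tlam i) * (1 - tlam i)⁻¹) = fun _ : Fin s => (1 : ℝ) :=
      funext fun i => mul_inv_cancel₀ (htlam1 i)
    rw [Matrix.diagonal_mul_diagonal, h1, Matrix.diagonal_one]
  have hlamk1 : ∀ j : Fin k, (1 : ℝ) - lam (Fin.castLE hks.le j) ≠ 0 := by
    intro j
    have := (hlam0 (Fin.castLE hks.le j)).2; linarith
  have hsubk : (1 : Matrix (Fin k) (Fin k) ℝ) - Lamk =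
      Matrix.diagonal (fun j : Fin k => 1 - lam (Fin.castLE hks.le j)) := by
    rw [hLamk]
    ext i j
    by_cases h : i = j <;> simp [h, Matrix.one_apply]
  have hLamkinv : (1 - Lamk)⁻¹ =
      Matrix.diagonal (fun j : Fin k => (1 - lam (Fin.castLE hks.le j))⁻¹) := by
    rw [hsubk]
    apply Matrix.inv_eq_right_inv
    have h1 : (fun j : Fin k => (1 - lam (Fin.castLE hks.le j)) * (1 - lam (Fin.castLE hks.le j))⁻¹) =
        fun _ : Fin k => (1 : ℝ) := funext fun j => mul_inv_cancel₀ (hlamk1 j)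
    rw [Matrix.diagonal_mul_diagonal, h1, Matrix.diagonal_one]
  set e : Fin s → ℝ := fun i => (1 - tlam i)⁻¹ - c with he
  have hsplit : Matrix.diagonal (fun i => (1 - tlam i)⁻¹) =
      c • (1 : Matrix (Fin s) (Fin s) ℝ) + Matrix.diagonal e := by
    ext i j
    by_cases h : i = j <;> simp [h, he, Matrix.one_apply]
  have he0 : ∀ i : Fin s, ¬ (i : ℕ) < k → e i = 0 := by
    intro i hi
    simp only [he, htlam i, if_neg hi, hc, one_div, sub_eq_zero]
  have hkey := key hks.le U e he0
  have hek : ∀ j : Fin k, e (Fin.castLE hks.le j) =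
      (1 - lam (Fin.castLE hks.le j))⁻¹ - c := by
    intro j
    simp only [he, htlam, Fin.coe_castLE, j.isLt, if_pos]
  have hCinv : C⁻¹ = (Lᵀ)⁻¹ * L⁻¹ := by rw [hC, Matrix.mul_inv_rev]
  have hZkT : Zkᵀ = Ukᵀ * L⁻¹ := by
    rw [hZk, Matrix.transpose_mul, Matrix.transpose_nonsing_inv, Matrix.transpose_transpose]
  rw [hdiag, hsplit, Matrix.mul_add, Matrix.add_mul, Matrix.add_mul]
  congr 1
  · rw [Matrix.mul_smul, Matrix.mul_one, Matrix.smul_mul, Matrix.smul_mul,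
      Matrix.mul_assoc (Lᵀ)⁻¹ U Uᵀ, hU, Matrix.mul_one, hCinv]
  · have hassoc : (Lᵀ)⁻¹ * U * Matrix.diagonal e * Uᵀ * L⁻¹ =
        (Lᵀ)⁻¹ * (U * Matrix.diagonal e * Uᵀ) * L⁻¹ := by
      simp only [Matrix.mul_assoc]
    have hdiageq : Matrix.diagonal (fun j : Fin k => e (Fin.castLE hks.le j)) =
        Matrix.diagonal (fun j : Fin k => (1 - lam (Fin.castLE hks.le j))⁻¹) -
          c • (1 : Matrix (Fin k) (Fin k) ℝ) := by
      ext i j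
      by_cases h : i = j <;> simp [h, hek, Matrix.one_apply]
    rw [hassoc, hkey, hZkT, hZk, hUk, hLamkinv, hdiageq]
    simp only [Matrix.mul_assoc]
end

section
/- Let T be the n×n symmetric tridiagonal matrix with 2a on the diagonal and -1 on the sub- and super-diagonals, with a > 1. If T = L U is the (unpivoted) LU factorization with U having diagonal entries d_1, …, d_n given by d_1 = 2a, d_k = 2a - 1/d_{k-1}, then d_n = U_n(a)/U_{n-1}(a), where U_k is the degree-k Chebyshev polynomial of the second kind. -/
open Polynomial

lemma U_pos_mono (a : ℝ) (ha : 1 < a) :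
    ∀ n : ℕ, 0 < (Polynomial.Chebyshev.U ℝ (n : ℤ)).eval a ∧
      (Polynomial.Chebyshev.U ℝ ((n : ℤ) - 1)).eval a <
        (Polynomial.Chebyshev.U ℝ (n : ℤ)).eval a := by
  intro n
  induction n with
  | zero => simp [Polynomial.Chebyshev.U_zero, Polynomial.Chebyshev.U_neg_one]
  | succ k ih =>
    obtain ⟨h1, h2⟩ := ih
    have hrec : (Polynomial.Chebyshev.U ℝ ((k : ℤ) + 1)).eval a =
        2 * a * (Polynomial.Chebyshev.U ℝ (k : ℤ)).eval a -
          (Polynomial.Chebyshev.U ℝ ((k : ℤ) - 1)).eval a := by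
      rw [Polynomial.Chebyshev.U_add_one]; simp
    have key : (Polynomial.Chebyshev.U ℝ (k : ℤ)).eval a <
        (Polynomial.Chebyshev.U ℝ ((k : ℤ) + 1)).eval a := by
      rw [hrec]; nlinarith
    constructor
    · push_cast; linarith
    · push_cast; simpa using key

/-- the pivots `d_1 = 2a`, `d_k = 2a - 1/d_{k-1}` of the LU factorization of
the tridiagonal matrix with diagonal `2a` satisfy `d_n = U_n(a)/U_{n-1}(a)`. -/
theorem stmt_10 (a : ℝ) (ha : 1 < a) (d : ℕ → ℝ)
    (hd1 : d 1 = 2 * a)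
    (hdk : ∀ k : ℕ, 2 ≤ k → d k = 2 * a - 1 / d (k - 1)) :
    ∀ n : ℕ, 1 ≤ n →
      d n = (Polynomial.Chebyshev.U ℝ (n : ℤ)).eval a /
        (Polynomial.Chebyshev.U ℝ ((n : ℤ) - 1)).eval a := by
  intro n hn
  induction n with
  | zero => omega
  | succ k ih =>
    rcases Nat.eq_or_lt_of_le hn with h | h
    · -- k + 1 = 1
      have hk : k = 0 := by omega
      subst hk
      simp [hd1, Polynomial.Chebyshev.U_one, Polynomial.Chebyshev.U_zero]
    · have hk1 : 1 ≤ k := by omega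
      have ihk := ih hk1
      have hk2 : 2 ≤ k + 1 := by omega
      have hstep := hdk (k + 1) hk2
      simp only [Nat.add_sub_cancel] at hstep
      obtain ⟨hUk, _⟩ := U_pos_mono a ha k
      obtain ⟨hUkm, _⟩ := U_pos_mono a ha (k - 1)
      have hkm : ((k : ℤ) - 1) = ((k - 1 : ℕ) : ℤ) := by omega
      have hUkm' : 0 < (Polynomial.Chebyshev.U ℝ ((k : ℤ) - 1)).eval a := by
        rw [hkm]; exact hUkm
      have hrec : (Polynomial.Chebyshev.U ℝ ((k : ℤ) + 1)).eval a =
          2 * a * (Polynomial.Chebyshev.U ℝ (k : ℤ)).eval a -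
            (Polynomial.Chebyshev.U ℝ ((k : ℤ) - 1)).eval a := by
        rw [Polynomial.Chebyshev.U_add_one]; simp
      rw [hstep, ihk]
      have : ((k + 1 : ℕ) : ℤ) = (k : ℤ) + 1 := by push_cast; ring
      rw [this]
      simp only [add_sub_cancel_right]
      rw [hrec]
      field_simp
end

section
/- For a > 1 and n ≥ 1, the last entry of the solution x of T x = e_n, where T is the n×n tridiagonal matrix with diagonal 2a and off-diagonals -1 and e_n the n-th standard basis vector, equals U_{n-1}(a)/U_n(a), where U_k denotes the Chebyshev polynomial of the second kind. -/
/-!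
Extend `x` by zero to `ℤ`. Row `i` of `T x = e_n` then reads
`2a x_i - x_{i-1} - x_{i+1} = [i = n - 1]`, so the first `n - 1` rows are the Chebyshev
recurrence with `x_{-1} = 0`, giving `x_k = U_k(a) x_0`; the last row, where `x_n = 0`,
becomes `U_n(a) x_0 = 1`.
-/

open Matrix Polynomial

section ExtendByZero

variable {R : Type*} {n : ℕ}

def extendByZero [Zero R] (x : Fin n → R) (k : ℤ) : R :=
  if h : 0 ≤ k ∧ k < n then x ⟨k.toNat, by omega⟩ else 0

section Zero

variable [Zero R] (x : Fin n → R)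

@[simp]
theorem extendByZero_natCast (i : Fin n) : extendByZero x (i : ℕ) = x i := by
  simp [extendByZero]

theorem extendByZero_of_neg {k : ℤ} (hk : k < 0) : extendByZero x k = 0 :=
  dif_neg (by omega)

theorem extendByZero_of_le {k : ℤ} (hk : n ≤ k) : extendByZero x k = 0 :=
  dif_neg (by omega)

end Zero

theorem sum_ite_intCast_eq [AddCommMonoid R] (x : Fin n → R) (k : ℤ) :
    ∑ j : Fin n, (if ((j : ℕ) : ℤ) = k then x j else 0) = extendByZero x k := by
  by_cases hk : 0 ≤ k ∧ k < n
  · have hj : ∀ j : Fin n, ((j : ℕ) : ℤ) = k ↔ ⟨k.toNat, by omega⟩ = j := fun j => by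
      simp only [Fin.ext_iff]; omega
    simp only [hj, Finset.sum_ite_eq, Finset.mem_univ, if_true]
    rw [extendByZero, dif_pos hk]
  · rw [extendByZero, dif_neg hk]
    exact Finset.sum_eq_zero fun j _ => if_neg (by omega)

end ExtendByZero

theorem tridiagonal_mulVec_apply {R : Type*} [CommRing R] {n : ℕ} {a : R}
    {T : Matrix (Fin n) (Fin n) R}
    (hT : ∀ i j : Fin n, T i j =
      if i = j then 2 * a
      else if (i : ℕ) + 1 = (j : ℕ) ∨ (j : ℕ) + 1 = (i : ℕ) then -1 else 0)
    (x : Fin n → R) (i : Fin n) :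
    (T *ᵥ x) i = 2 * a * extendByZero x (i : ℕ) - extendByZero x ((i : ℕ) - 1)
      - extendByZero x ((i : ℕ) + 1) := by
  have hentry : ∀ j, T i j * x j = (if i = j then 2 * a * x j else 0)
      - (if ((j : ℕ) : ℤ) = (i : ℕ) - 1 then x j else 0)
      - (if ((j : ℕ) : ℤ) = (i : ℕ) + 1 then x j else 0) := fun j => by
    rw [hT]
    split_ifs <;> simp only [Fin.ext_iff] at * <;> first | omega | ring
  simp only [mulVec, dotProduct, hentry, Finset.sum_sub_distrib, Finset.sum_ite_eq,
    Finset.mem_univ, if_true, sum_ite_intCast_eq, extendByZero_natCast]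

theorem chebyshevU_eval_add_one {R : Type*} [CommRing R] (n : ℤ) (a : R) :
    (Chebyshev.U R (n + 1)).eval a =
      2 * a * (Chebyshev.U R n).eval a - (Chebyshev.U R (n - 1)).eval a := by
  simp only [Chebyshev.U_add_one, eval_sub, eval_mul, eval_ofNat, eval_X]

theorem eq_chebyshevU_eval_mul_of_recurrence {R : Type*} [CommRing R] {a : R} {y : ℤ → R}
    {N : ℕ} (hy : y (-1) = 0) (hrec : ∀ k : ℕ, k < N → y (k + 1) = 2 * a * y k - y (k - 1))
    (k : ℤ) (hk₀ : -1 ≤ k) (hkN : k ≤ N) : y k = (Chebyshev.U R k).eval a * y 0 := by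
  have hpair : ∀ k : ℕ, k ≤ N →
      y k = (Chebyshev.U R k).eval a * y 0 ∧
        y (k - 1) = (Chebyshev.U R (k - 1)).eval a * y 0 := by
    intro k
    induction k with
    | zero => simp [hy]
    | succ k ih =>
      intro hkN
      obtain ⟨hk, hk_pred⟩ := ih (by omega)
      push_cast
      refine ⟨?_, by simpa using hk⟩
      rw [hrec k (by omega), hk, hk_pred, chebyshevU_eval_add_one]
      ring
  obtain rfl | hk := (by omega : k = -1 ∨ 0 ≤ k)
  · simp [hy]
  · lift k to ℕ using hk
    exact (hpair k (by omega)).1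

theorem stmt_11_general (a : ℝ) (m : ℕ)
    (T : Matrix (Fin (m + 1)) (Fin (m + 1)) ℝ)
    (hT : ∀ i j : Fin (m + 1), T i j =
      if i = j then 2 * a
      else if (i : ℕ) + 1 = (j : ℕ) ∨ (j : ℕ) + 1 = (i : ℕ) then -1 else 0)
    (x : Fin (m + 1) → ℝ)
    (hx : T *ᵥ x = Pi.single (Fin.last m) 1) :
    x (Fin.last m) = (Polynomial.Chebyshev.U ℝ (m : ℤ)).eval a /
      (Polynomial.Chebyshev.U ℝ ((m : ℤ) + 1)).eval a := by
  set y := extendByZero x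
  have hrow (i : Fin (m + 1)) :
      2 * a * y (i : ℕ) - y ((i : ℕ) - 1) - y ((i : ℕ) + 1) =
        (Pi.single (Fin.last m) 1 : Fin (m + 1) → ℝ) i :=
    (tridiagonal_mulVec_apply hT x i).symm.trans (congrFun hx i)
  have hcheb : ∀ k : ℤ, -1 ≤ k → k ≤ m → y k = (Chebyshev.U ℝ k).eval a * y 0 := by
    refine eq_chebyshevU_eval_mul_of_recurrence (extendByZero_of_neg x (by norm_num))
      fun k hk => ?_
    have := hrow ⟨k, by omega⟩
    rw [Pi.single_eq_of_ne (by simp [Fin.ext_iff]; omega)] at this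
    linear_combination -this
  have hlast : 2 * a * y m - y (m - 1) = 1 := by
    have hout : y (m + 1) = 0 := extendByZero_of_le x (by push_cast; omega)
    simpa [hout] using hrow (Fin.last m)
  have hdet : (Chebyshev.U ℝ (m + 1)).eval a * y 0 = 1 := by
    rw [chebyshevU_eval_add_one, ← hlast, hcheb m (by omega) le_rfl,
      hcheb (m - 1) (by omega) (by omega)]
    ring
  calc x (Fin.last m) = y m := (extendByZero_natCast x _).symm
    _ = _ := by
      rw [hcheb m (by omega) le_rfl, eq_div_iff (left_ne_zero_of_mul_eq_one hdet)]
      linear_combination (Chebyshev.U ℝ m).eval a * hdet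

/-- the last entry of the solution of `T x = e_n` for the `n × n`
tridiagonal matrix with diagonal `2a` and off-diagonals `-1` equals
`U_{n-1}(a)/U_n(a)` (here `n = m + 1`). -/
theorem stmt_11 (a : ℝ) (ha : 1 < a) (m : ℕ)
    (T : Matrix (Fin (m + 1)) (Fin (m + 1)) ℝ)
    (hT : ∀ i j : Fin (m + 1), T i j =
      if i = j then 2 * a
      else if (i : ℕ) + 1 = (j : ℕ) ∨ (j : ℕ) + 1 = (i : ℕ) then -1 else 0)
    (x : Fin (m + 1) → ℝ)
    (hx : T *ᵥ x = Pi.single (Fin.last m) 1) :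
    x (Fin.last m) = (Polynomial.Chebyshev.U ℝ (m : ℤ)).eval a /
      (Polynomial.Chebyshev.U ℝ ((m : ℤ) + 1)).eval a :=
  stmt_11_general a m T hT x hx
end
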